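/- Let n ≥ 2, A ∈ ℂ with A ≠ 0, and λ_1,…,λ_n ∈ ℂ with λ_k² ≠ λ_ℓ² for all k ≠ ℓ. Define Ψ : ℝ^n → ℂ by Ψ(x_1,…,x_n) = (1/(2i)^n) Σ_{P∈S_n} Σ_{ε∈{±1}^n} (Π_{p=1}^n ε_p e^{i ε_p x_p λ_{P(p)}}) · A[ε_1 λ_{P(1)}, …, ε_n λ_{P(n)}]. Then Ψ satisfies the two-body matching condition of the attractive delta-Bose gas with coupling c̄ = 1: for every j ∈ {1,…,n−1} and all real values of the coordinates, ( ∂_{x_{j+1}} Ψ − ∂_{x_j} Ψ + Ψ )(x_1,…,x_n) = 0 whenever x_{j+1} = x_j. -/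

import Mathlib

open Complex Finset

/-- The sign `±1 ∈ ℂ` associated to a boolean. -/
def pmSign (b : Bool) : ℂ := if b then 1 else -1

/-- The half-space Bethe amplitude
`A[μ₁,…,μ_n] = Π_{k<ℓ} (1 + i/(μ_ℓ − μ_k))(1 + i/(μ_ℓ + μ_k)) · Π_ℓ (1 + i μ_ℓ/A)`. -/
noncomputable def betheAmp {n : ℕ} (A : ℂ) (μ : Fin n → ℂ) : ℂ :=
  (∏ p ∈ Finset.univ.filter (fun p : Fin n × Fin n => p.1 < p.2),
    (1 + I / (μ p.2 - μ p.1)) * (1 + I / (μ p.2 + μ p.1))) *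
  ∏ l : Fin n, (1 + I * μ l / A)

/-- The half-space Bethe wavefunction. -/
noncomputable def bethePsi {n : ℕ} (A : ℂ) (lam : Fin n → ℂ) (x : Fin n → ℝ) : ℂ :=
  (1 / (2 * I) ^ n) *
    ∑ P : Equiv.Perm (Fin n), ∑ ε : Fin n → Bool,
      (∏ p : Fin n, pmSign (ε p) * Complex.exp (I * pmSign (ε p) * (x p : ℂ) * lam (P p))) *
        betheAmp A (fun p => pmSign (ε p) * lam (P p))

/-!
Differentiating in `x_c` multiplies the `(P, ε)` term of `Ψ` by `i μ_c`, where
`μ_p = ε_p λ_{P p}`, so the matching expression is `Σ_{P,ε} (1 + i (μ_{j+1} - μ_j)) E_{P,ε}(x) A[μ]`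
with `E` the plane wave. Pair `(P, ε)` with `(P s, ε ∘ s)`, `s` the transposition of `j` and `j+1`.
On `x_j = x_{j+1}` the plane wave is unchanged, and `s` permutes the pairs `k < ℓ` other than
`(j, j+1)`, so only the factor of that pair changes in the amplitude; with `d = μ_{j+1} - μ_j ≠ 0`
this gives `(1 - i d) A[μ ∘ s] = -(1 + i d) A[μ]`, and the paired terms cancel.
-/

lemma swap_lt_swap_of_lt {n : ℕ} {a b k l : Fin n} (hab : (a : ℕ) + 1 = b) (hkl : k < l)
    (hne : (k, l) ≠ (a, b)) : Equiv.swap a b k < Equiv.swap a b l := by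
  simp only [ne_eq, Prod.mk.injEq] at hne
  simp only [Equiv.swap_apply_def]
  split_ifs <;> simp only [Fin.lt_def, Fin.ext_iff] at * <;> omega

lemma mk_mem_lt_pairs {n : ℕ} {a b : Fin n} (hab : (a : ℕ) + 1 = b) :
    (a, b) ∈ univ.filter (fun p : Fin n × Fin n => p.1 < p.2) := by
  simp only [mem_filter, mem_univ, true_and]
  exact Fin.lt_def.2 (by omega)

lemma prod_lt_pairs_comp_swap {M : Type*} [CommMonoid M] {n : ℕ} {a b : Fin n}
    (hab : (a : ℕ) + 1 = b) (F : Fin n → Fin n → M) :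
    ∏ p ∈ univ.filter (fun p : Fin n × Fin n => p.1 < p.2),
        F (Equiv.swap a b p.1) (Equiv.swap a b p.2)
      = F b a * ∏ p ∈ (univ.filter (fun p : Fin n × Fin n => p.1 < p.2)).erase (a, b),
          F p.1 p.2 := by
  set s := Equiv.swap a b
  set S := univ.filter (fun p : Fin n × Fin n => p.1 < p.2)
  have hswap : ∀ p ∈ S.erase (a, b), Prod.map s s p ∈ S.erase (a, b) := by
    rintro ⟨k, l⟩ hp
    obtain ⟨hne, hkl⟩ : (k, l) ≠ (a, b) ∧ k < l := by simpa [S] using hp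
    have hlt := swap_lt_swap_of_lt hab hkl hne
    refine mem_erase.2 ⟨fun h => ?_, by simpa [S] using hlt⟩
    simp only [Prod.map, Prod.mk.injEq, s, Equiv.swap_apply_eq_iff, Equiv.swap_apply_left,
      Equiv.swap_apply_right] at h
    obtain ⟨rfl, rfl⟩ := h
    exact absurd hkl (by rw [Fin.lt_def]; omega)
  rw [← mul_prod_erase S _ (mk_mem_lt_pairs hab)]
  simp only [s, Equiv.swap_apply_left, Equiv.swap_apply_right]
  congr 1
  exact prod_nbij' (Prod.map s s) (Prod.map s s) hswap hswap (fun p _ => by simp [s, Prod.map])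
    (fun p _ => by simp [s, Prod.map]) (fun _ _ => rfl)

lemma prod_comp_swap_of_eq {ι α M : Type*} [Fintype ι] [DecidableEq ι] [CommMonoid M]
    (G : ι → α → M) (x : ι → α) {a b : ι} (hx : x a = x b) :
    ∏ p, G (Equiv.swap a b p) (x p) = ∏ p, G p (x p) := by
  have hxs : ∀ p, x p = x (Equiv.swap a b p) := by
    intro p
    rw [Equiv.swap_apply_def]
    split_ifs with h₁ h₂
    · rw [h₁, hx]
    · rw [h₂, hx]
    · rfl
  calc ∏ p, G (Equiv.swap a b p) (x p) = ∏ p, G (Equiv.swap a b p) (x (Equiv.swap a b p)) :=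
        prod_congr rfl fun p _ => by rw [← hxs p]
    _ = ∏ p, G p (x p) := Equiv.prod_comp (Equiv.swap a b) fun p => G p (x p)

lemma hasDerivAt_prod_update {𝕜 𝔸 ι : Type*} [NontriviallyNormedField 𝕜] [NormedCommRing 𝔸]
    [NormedAlgebra 𝕜 𝔸] [Fintype ι] [DecidableEq ι] (g : ι → 𝕜 → 𝔸) (x : ι → 𝕜) (c : ι)
    {d : 𝔸} (hg : HasDerivAt (g c) d (x c)) :
    HasDerivAt (fun y => ∏ p, g p (Function.update x c y p))
      (d * ∏ p ∈ univ \ {c}, g p (x p)) (x c) := by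
  simp only [Function.apply_update (fun p => g p) x,
    prod_update_of_mem (mem_univ c) (fun p => g p (x p))]
  exact hg.mul_const _

lemma one_add_I_div_sub_mul_one_sub_I_mul {u v : ℂ} (h : u ≠ v) :
    (1 + I / (u - v)) * (1 - I * (v - u)) = -((1 + I / (v - u)) * (1 + I * (v - u))) := by
  have huv : u - v ≠ 0 := sub_ne_zero.2 h
  have hvu : v - u ≠ 0 := sub_ne_zero.2 h.symm
  field_simp
  ring_nf
  simp only [I_sq]
  ring

lemma betheAmp_comp_swap {n : ℕ} (A : ℂ) (μ : Fin n → ℂ) {a b : Fin n}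
    (hab : (a : ℕ) + 1 = b) (hμ : μ a ≠ μ b) :
    (1 - I * (μ b - μ a)) * betheAmp A (μ ∘ Equiv.swap a b)
      = -((1 + I * (μ b - μ a)) * betheAmp A μ) := by
  unfold betheAmp
  simp only [Function.comp_apply]
  rw [Equiv.prod_comp (Equiv.swap a b) (fun l => 1 + I * μ l / A),
    prod_lt_pairs_comp_swap hab (fun k l => (1 + I / (μ l - μ k)) * (1 + I / (μ l + μ k))),
    ← mul_prod_erase _ _ (mk_mem_lt_pairs hab), add_comm (μ a) (μ b)]
  set R := ∏ p ∈ (univ.filter (fun p : Fin n × Fin n => p.1 < p.2)).erase (a, b),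
    (1 + I / (μ p.2 - μ p.1)) * (1 + I / (μ p.2 + μ p.1))
  linear_combination (1 + I / (μ b + μ a)) * R * (∏ l, (1 + I * μ l / A)) *
    one_add_I_div_sub_mul_one_sub_I_mul hμ

lemma pmSign_sq (b : Bool) : pmSign b ^ 2 = 1 := by cases b <;> simp [pmSign]

section BetheTerms

variable {n : ℕ} (A : ℂ) (lam : Fin n → ℂ) (P : Equiv.Perm (Fin n)) (ε : Fin n → Bool)

def signedMomenta : Fin n → ℂ := fun p => pmSign (ε p) * lam (P p)

lemma signedMomenta_sq (p : Fin n) : signedMomenta lam P ε p ^ 2 = lam (P p) ^ 2 := by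
  rw [signedMomenta, mul_pow, pmSign_sq, one_mul]

lemma signedMomenta_mul_comp (σ : Equiv.Perm (Fin n)) :
    signedMomenta lam (P * σ) (ε ∘ σ) = signedMomenta lam P ε ∘ σ :=
  rfl

noncomputable def betheTerm (x : Fin n → ℝ) : ℂ :=
  (∏ p, pmSign (ε p) * exp (I * pmSign (ε p) * (x p : ℂ) * lam (P p))) *
    betheAmp A (signedMomenta lam P ε)

lemma bethePsi_eq_sum_betheTerm (x : Fin n → ℝ) :
    bethePsi A lam x = 1 / (2 * I) ^ n * ∑ P, ∑ ε, betheTerm A lam P ε x :=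
  rfl

lemma hasDerivAt_betheTerm_update (x : Fin n → ℝ) (c : Fin n) :
    HasDerivAt (fun y => betheTerm A lam P ε (Function.update x c y))
      (I * signedMomenta lam P ε c * betheTerm A lam P ε x) (x c) := by
  set g : Fin n → ℝ → ℂ := fun p y => pmSign (ε p) * exp (I * pmSign (ε p) * y * lam (P p))
  have hg : HasDerivAt (g c) (I * signedMomenta lam P ε c * g c (x c)) (x c) :=
    ((((hasDerivAt_id' (x c)).ofReal_comp.const_mul (I * pmSign (ε c))).mul_const
      (lam (P c))).cexp.const_mul (pmSign (ε c))).congr_deriv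
      (by simp only [g, signedMomenta, ofReal_one]; ring)
  refine ((hasDerivAt_prod_update g x c hg).mul_const
    (betheAmp A (signedMomenta lam P ε))).congr_deriv ?_
  rw [betheTerm, ← mul_prod_erase univ (fun p => g p (x p)) (mem_univ c),
    sdiff_singleton_eq_erase]
  ring

lemma hasDerivAt_bethePsi_update (x : Fin n → ℝ) (c : Fin n) :
    HasDerivAt (fun y => bethePsi A lam (Function.update x c y))
      (1 / (2 * I) ^ n * ∑ P, ∑ ε, I * signedMomenta lam P ε c * betheTerm A lam P ε x) (x c) :=
  .const_mul _ <| .fun_sum fun P _ => .fun_sum fun ε _ => hasDerivAt_betheTerm_update A lam P ε x c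

lemma betheTerm_mul_swap {x : Fin n → ℝ} {a b : Fin n} (hx : x a = x b) :
    betheTerm A lam (P * Equiv.swap a b) (ε ∘ Equiv.swap a b) x
      = (∏ p, pmSign (ε p) * exp (I * pmSign (ε p) * (x p : ℂ) * lam (P p))) *
          betheAmp A (signedMomenta lam P ε ∘ Equiv.swap a b) := by
  rw [betheTerm, signedMomenta_mul_comp]
  congr 1
  exact prod_comp_swap_of_eq
    (fun p (y : ℝ) => pmSign (ε p) * exp (I * pmSign (ε p) * (y : ℂ) * lam (P p))) x hx

lemma matching_terms_add_swap_eq_zero {x : Fin n → ℝ} {a b : Fin n}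
    (hab : (a : ℕ) + 1 = b) (hx : x a = x b)
    (hμ : signedMomenta lam P ε a ≠ signedMomenta lam P ε b) :
    (1 + I * (signedMomenta lam P ε b - signedMomenta lam P ε a)) * betheTerm A lam P ε x
      + (1 + I * (signedMomenta lam (P * Equiv.swap a b) (ε ∘ Equiv.swap a b) b
          - signedMomenta lam (P * Equiv.swap a b) (ε ∘ Equiv.swap a b) a))
        * betheTerm A lam (P * Equiv.swap a b) (ε ∘ Equiv.swap a b) x = 0 := by
  rw [betheTerm_mul_swap A lam P ε hx, signedMomenta_mul_comp, betheTerm]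
  simp only [Function.comp_apply, Equiv.swap_apply_left, Equiv.swap_apply_right]
  linear_combination (∏ p, pmSign (ε p) * exp (I * pmSign (ε p) * (x p : ℂ) * lam (P p))) *
    betheAmp_comp_swap A (signedMomenta lam P ε) hab hμ

lemma sum_matching_terms_eq_zero (hlam : ∀ k l, k ≠ l → lam k ^ 2 ≠ lam l ^ 2)
    {x : Fin n → ℝ} {a b : Fin n} (hab : (a : ℕ) + 1 = b) (hx : x a = x b) :
    ∑ P, ∑ ε, (1 + I * (signedMomenta lam P ε b - signedMomenta lam P ε a))
      * betheTerm A lam P ε x = 0 := by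
  have hne : a ≠ b := fun h => by rw [h] at hab; omega
  rw [← Fintype.sum_prod_type']
  refine sum_ninvolution (fun q => (q.1 * Equiv.swap a b, q.2 ∘ Equiv.swap a b)) ?_ ?_
    (fun _ => mem_univ _) ?_
  · rintro ⟨P, ε⟩
    refine matching_terms_add_swap_eq_zero A lam P ε hab hx fun h => ?_
    refine hlam (P a) (P b) (P.injective.ne hne) ?_
    rw [← signedMomenta_sq lam P ε, ← signedMomenta_sq lam P ε, h]
  · rintro ⟨P, ε⟩ - h
    simp only [Prod.mk.injEq, mul_eq_left, Equiv.swap_eq_one_iff] at h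
    exact hne h.1
  · rintro ⟨P, ε⟩
    simp [mul_assoc, Function.comp_def]

end BetheTerms

/-- **Two-body matching condition of the attractive delta-Bose gas (`c̄ = 1`)** for the
half-space Bethe wavefunction: for all adjacent coordinates `j, j+1` and all points with
`x_{j+1} = x_j`, `(∂_{x_{j+1}}Ψ − ∂_{x_j}Ψ + Ψ)(x) = 0`. -/
theorem bethe_matching_condition (n : ℕ) (A : ℂ)
    (lam : Fin n → ℂ) (hll : ∀ k l, k ≠ l → lam k ^ 2 ≠ lam l ^ 2) :
    ∀ (j : ℕ) (hj : j + 1 < n) (x : Fin n → ℝ),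
      x ⟨j + 1, hj⟩ = x ⟨j, by omega⟩ →
      deriv (fun y : ℝ => bethePsi A lam (Function.update x ⟨j + 1, hj⟩ y)) (x ⟨j + 1, hj⟩)
        - deriv (fun y : ℝ => bethePsi A lam (Function.update x ⟨j, by omega⟩ y))
            (x ⟨j, by omega⟩)
        + bethePsi A lam x = 0 := by
  intro j hj x hx
  set a : Fin n := ⟨j, by omega⟩
  set b : Fin n := ⟨j + 1, hj⟩
  calc _ = 1 / (2 * I) ^ n * ∑ P, ∑ ε,
        (1 + I * (signedMomenta lam P ε b - signedMomenta lam P ε a)) * betheTerm A lam P ε x := by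
        rw [(hasDerivAt_bethePsi_update A lam x a).deriv,
          (hasDerivAt_bethePsi_update A lam x b).deriv, bethePsi_eq_sum_betheTerm, ← mul_sub,
          ← mul_add]
        simp only [← sum_sub_distrib, ← sum_add_distrib]
        congr! 3
        ring
    _ = 0 := by rw [sum_matching_terms_eq_zero A lam hll rfl hx.symm, mul_zero]
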